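/- Let δ > 0 be real and define, for spin variables s₂, s₃, s₄, s₅ ∈ {−1, +1}, the penalty function P(s₂,s₃,s₄,s₅) = (δ/2)·(4 + s₂s₃ + (s₂ + s₃)s₄ + 2(1 − s₂ − s₃ − s₄)s₅ − s₂ − s₃ − s₄). Then for all s₂, s₃, s₄ ∈ {−1,+1}: min over s₅ ∈ {−1,+1} of P(s₂,s₃,s₄,s₅) equals 0 if s₄ = s₂·s₃, and equals δ if s₄ ≠ s₂·s₃. -/

import Mathlib

/-- The 2-local penalty part of the paper's 3-local gadget with two mediator
spins (Equation (10)):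
`P(s₂,s₃,s₄,s₅) = (δ/2)(4 + s₂s₃ + (s₂+s₃)s₄ + 2(1 − s₂ − s₃ − s₄)s₅ − s₂ − s₃ − s₄)`. -/
noncomputable def Ppen (δ s₂ s₃ s₄ s₅ : ℝ) : ℝ :=
  (δ / 2) * (4 + s₂ * s₃ + (s₂ + s₃) * s₄ + 2 * (1 - s₂ - s₃ - s₄) * s₅
    - s₂ - s₃ - s₄)

/-!
The penalty is affine in the mediator spin, `P = (δ/2)(a + b s₅)`, so its minimum over
`s₅ = ±1` is `(δ/2)(a - |b|)`. On the eight assignments of `s₂, s₃, s₄` one finds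
`a - |b| = 1 - s₂ s₃ s₄`, which is `0` when `s₄ = s₂ s₃` and `2` when `s₄ = -s₂ s₃`.
-/

def IsSpin {R : Type*} [Ring R] (x : R) : Prop := x = -1 ∨ x = 1

namespace IsSpin

variable {R : Type*} [Ring R] {x y : R}

theorem mul_self (hx : IsSpin x) : x * x = 1 := by
  rcases hx with rfl | rfl <;> simp

theorem mul (hx : IsSpin x) (hy : IsSpin y) : IsSpin (x * y) := by
  rcases hx with rfl | rfl <;> rcases hy with rfl | rfl <;> simp [IsSpin]

theorem eq_neg_of_ne (hx : IsSpin x) (hy : IsSpin y) (hxy : x ≠ y) : x = -y := by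
  rcases hx with rfl | rfl <;> rcases hy with rfl | rfl <;> simp_all

end IsSpin

theorem min_sub_add_eq_sub_abs {α : Type*} [AddCommGroup α] [LinearOrder α]
    [IsOrderedAddMonoid α] (a b : α) : min (a - b) (a + b) = a - |b| := by
  rw [sub_eq_add_neg, min_add_add_left, sub_eq_add_neg, abs_eq_max_neg, ← min_neg_neg, neg_neg]

theorem min_Ppen_eq_of_isSpin {δ s₂ s₃ s₄ : ℝ} (hδ : 0 ≤ δ) (h₂ : IsSpin s₂) (h₃ : IsSpin s₃)
    (h₄ : IsSpin s₄) :
    min (Ppen δ s₂ s₃ s₄ (-1)) (Ppen δ s₂ s₃ s₄ 1) = δ / 2 * (1 - s₂ * s₃ * s₄) := by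
  have hbias_sub_abs_field : 4 + s₂ * s₃ + (s₂ + s₃) * s₄ - s₂ - s₃ - s₄
      - |2 * (1 - s₂ - s₃ - s₄)| = 1 - s₂ * s₃ * s₄ := by
    rcases h₂ with rfl | rfl <;> rcases h₃ with rfl | rfl <;> rcases h₄ with rfl | rfl <;>
      norm_num
  rw [← hbias_sub_abs_field, ← min_sub_add_eq_sub_abs, mul_min_of_nonneg _ _ (by positivity)]
  congr 1 <;> unfold Ppen <;> ring

theorem eqv_spin_penalty
    (δ : ℝ) (hδ : 0 < δ)
    (s₂ s₃ s₄ : ℝ) (h₂ : s₂ = -1 ∨ s₂ = 1) (h₃ : s₃ = -1 ∨ s₃ = 1)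
    (h₄ : s₄ = -1 ∨ s₄ = 1) :
    (s₄ = s₂ * s₃ → min (Ppen δ s₂ s₃ s₄ (-1)) (Ppen δ s₂ s₃ s₄ 1) = 0) ∧
    (s₄ ≠ s₂ * s₃ → min (Ppen δ s₂ s₃ s₄ (-1)) (Ppen δ s₂ s₃ s₄ 1) = δ) := by
  rw [min_Ppen_eq_of_isSpin hδ.le h₂ h₃ h₄]
  have h₂₃ : IsSpin (s₂ * s₃) := IsSpin.mul h₂ h₃
  refine ⟨fun h => ?_, fun h => ?_⟩
  · rw [h, h₂₃.mul_self, sub_self, mul_zero]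
  · rw [IsSpin.eq_neg_of_ne h₄ h₂₃ h]
    linear_combination δ / 2 * h₂₃.mul_self
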